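/- Fix n ≥ 2. The map assigning to each n-core partition the n-tuple (a_1, ..., a_n), where a_i is the number of beads at positive positions on runner i of its n-abacus minus the number of vacant non-positive positions on runner i, is a bijection from the set of n-core partitions onto the set of n-tuples of integers with a_1 + ... + a_n = 0. -/

import Mathlib

/-- A partition: a finite non-increasing list of positive integers. -/
def PartL : Type := {L : List ℕ // List.Pairwise (· ≥ ·) L ∧ ∀ x ∈ L, 0 < x}

/-- The `r`-th part (0-indexed) of a partition list, zero beyond its length. -/
def partFn (L : List ℕ) (r : ℕ) : ℕ := L.getD r 0

/-- The β-number sequence of a partition (0-indexed): `b j = λ_{j+1} - j`. -/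
def betaFun (L : List ℕ) : ℕ → ℤ := fun j => (partFn L j : ℤ) - j

/-- The set of β-numbers of a partition (positions of beads on the abacus). -/
def betaSet (L : List ℕ) : Set ℤ := Set.range (betaFun L)

/-- The abacus tuple of a partition: `a r` is the number of beads in strictly
positive positions on the runner of residue `r` mod `n`, minus the number of
vacant non-positive positions on that runner.  (The paper labels runners
`1, …, n`; runner `i` carries the positions of residue `i` mod `n`.) -/
noncomputable def abacus (n : ℕ) (L : List ℕ) : Fin n → ℤ := fun r =>
  ({m : ℤ | m ∈ betaSet L ∧ 0 < m ∧ m % (n : ℤ) = (r : ℤ)}.ncard : ℤ) -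
  ({m : ℤ | m ≤ 0 ∧ m % (n : ℤ) = (r : ℤ) ∧ m ∉ betaSet L}.ncard : ℤ)

/-- `λ` is an `n`-core iff in its abacus all beads are pushed up as high as
possible, i.e. the bead set is closed under subtracting `n`. -/
def IsCore (n : ℕ) (L : List ℕ) : Prop := ∀ m ∈ betaSet L, m - (n : ℤ) ∈ betaSet L

/-!
A partition's bead set `B` is bounded above, contains every position `≤ -ℓ(λ)`, and has
charge `#{beads > 0} - #{gaps ≤ 0}` equal to `0`; conversely every such set is the β-set of
exactly one partition. The abacus tuple splits this charge runner by runner, so its entries sum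
to `0`. On each runner an `n`-core occupies exactly the positions up to some top bead, and the
runner's charge `a r` pins that top bead down. Hence a core is determined by its tuple, and a
tuple with sum `0` is realised by the set of positions lying at or below the prescribed top bead
of their runner.
-/

lemma partFn_antitone {L : List ℕ} (hs : List.Pairwise (· ≥ ·) L) : Antitone (partFn L) := by
  intro i j hij
  unfold partFn
  rcases lt_or_ge j L.length with hj | hj
  · rw [List.getD_eq_getElem _ _ hj, List.getD_eq_getElem _ _ (hij.trans_lt hj)]
    rcases hij.eq_or_lt with rfl | hij
    · rfl
    · exact List.pairwise_iff_getElem.1 hs i j _ hj hij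
  · rw [List.getD_eq_default _ _ hj]
    exact Nat.zero_le _

lemma betaFun_strictAnti {L : List ℕ} (hs : List.Pairwise (· ≥ ·) L) :
    StrictAnti (betaFun L) :=
  strictAnti_nat_of_succ_lt fun j => by
    have := partFn_antitone hs (Nat.le_add_right j 1)
    simp only [betaFun]
    omega

lemma betaFun_of_length_le {L : List ℕ} {j : ℕ} (h : L.length ≤ j) : betaFun L j = -j := by
  rw [betaFun, partFn, List.getD_eq_default _ _ h, Nat.cast_zero, zero_sub]

lemma partFn_injective {L₁ L₂ : List ℕ} (hp₁ : ∀ x ∈ L₁, 0 < x) (hp₂ : ∀ x ∈ L₂, 0 < x)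
    (h : partFn L₁ = partFn L₂) : L₁ = L₂ := by
  induction L₁ generalizing L₂ with
  | nil =>
    cases L₂ with
    | nil => rfl
    | cons b L₂ =>
      have := congrFun h 0
      simp only [partFn, List.getD_nil, List.getD_cons_zero] at this
      exact absurd this.symm (hp₂ b (by simp)).ne'
  | cons a L₁ ih =>
    cases L₂ with
    | nil =>
      have := congrFun h 0
      simp only [partFn, List.getD_nil, List.getD_cons_zero] at this
      exact absurd this (hp₁ a (by simp)).ne'
    | cons b L₂ =>
      have hab : a = b := by simpa [partFn] using congrFun h 0
      have htail : partFn L₁ = partFn L₂ :=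
        funext fun j => by simpa [partFn] using congrFun h (j + 1)
      rw [hab, ih (fun x hx => hp₁ x (by simp [hx])) (fun x hx => hp₂ x (by simp [hx])) htail]

lemma betaSet_injective {L₁ L₂ : PartL} (h : betaSet L₁.1 = betaSet L₂.1) : L₁ = L₂ := by
  have hbeta : betaFun L₁.1 = betaFun L₂.1 := by
    refine ((betaFun_strictAnti L₁.2.1).dual_right.range_inj
      (betaFun_strictAnti L₂.2.1).dual_right).1 ?_
    simp only [Set.range_comp, betaSet] at h ⊢
    rw [h]
  refine Subtype.ext (partFn_injective L₁.2.2 L₂.2.2 (funext fun j => ?_))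
  have := congrFun hbeta j
  simp only [betaFun] at this
  omega

/-- Meaningful only when `B` differs from `Set.Iic 0` at finitely many positions of `R`, since
`ncard` is `0` on infinite sets. -/
noncomputable def chargeOn (R B : Set ℤ) : ℤ :=
  ((B ∩ Set.Ioi 0 ∩ R).ncard : ℤ) - ((Set.Iic 0 \ B ∩ R).ncard : ℤ)

lemma range_inter_Ioi_eq_image {f : ℕ → ℤ} (hf : StrictAnti f) (j : ℕ) :
    Set.range f ∩ Set.Ioi (f j) = f '' Set.Iio j := by
  ext m
  constructor
  · rintro ⟨⟨i, rfl⟩, hi⟩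
    exact ⟨i, hf.lt_iff_gt.1 hi, rfl⟩
  · rintro ⟨i, hi, rfl⟩
    exact ⟨⟨i, rfl⟩, hf hi⟩

/-- Count the `j` beads above `f j` and the vacancies in `(f j, 0]`. -/
lemma natCast_add_eq_chargeOn_univ {f : ℕ → ℤ} (hf : StrictAnti f) {j : ℕ} (hj : f j ≤ 0)
    (hfull : Set.Iic (f j) ⊆ Set.range f) :
    (j : ℤ) + f j = chargeOn Set.univ (Set.range f) := by
  set B := Set.range f
  set X := B ∩ Set.Ioc (f j) 0
  have hXfin : X.Finite := (Set.finite_Ioc _ _).subset Set.inter_subset_right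
  have hGfin : (Set.Iic 0 \ B).Finite := (Set.finite_Ioc (f j) 0).subset fun m ⟨hm0, hmB⟩ =>
    ⟨not_le.1 fun h => hmB (hfull h), hm0⟩
  have habove : B ∩ Set.Ioi (f j) = (B ∩ Set.Ioi 0) ∪ X := by
    ext m
    simp only [X, Set.mem_inter_iff, Set.mem_union, Set.mem_Ioi, Set.mem_Ioc]
    constructor
    · rintro ⟨hm, hjm⟩; by_cases h0 : 0 < m
      · exact .inl ⟨hm, h0⟩
      · exact .inr ⟨hm, hjm, not_lt.1 h0⟩
    · rintro (⟨hm, h0⟩ | ⟨hm, hjm, -⟩)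
      exacts [⟨hm, hj.trans_lt h0⟩, ⟨hm, hjm⟩]
  have hbelow : Set.Ioc (f j) 0 = X ∪ (Set.Iic 0 \ B) := by
    ext m
    simp only [X, Set.mem_inter_iff, Set.mem_union, Set.mem_Ioc, Set.mem_sdiff, Set.mem_Iic]
    constructor
    · rintro ⟨hjm, hm0⟩; by_cases hm : m ∈ B
      · exact .inl ⟨hm, hjm, hm0⟩
      · exact .inr ⟨hm0, hm⟩
    · rintro (⟨-, hjm, hm0⟩ | ⟨hm0, hm⟩)
      exacts [⟨hjm, hm0⟩, ⟨not_le.1 fun h => hm (hfull h), hm0⟩]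
  have hcard_above : (B ∩ Set.Ioi (f j)).ncard = j := by
    rw [range_inter_Ioi_eq_image hf, Set.ncard_image_of_injective _ hf.injective]
    simp
  have hcard_below : (Set.Ioc (f j) 0).ncard = (0 - f j).toNat := by
    rw [← Finset.coe_Ioc, Set.ncard_coe_finset, Int.card_Ioc]
  have hPfin : (B ∩ Set.Ioi 0).Finite := by
    refine (Set.Finite.image f (Set.finite_Iio j)).subset ?_
    rw [← range_inter_Ioi_eq_image hf, habove]
    exact Set.subset_union_left
  have hPX : Disjoint (B ∩ Set.Ioi 0) X :=
    Set.disjoint_left.2 fun m ⟨_, h0⟩ ⟨_, _, hm0⟩ => (not_lt.2 hm0) h0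
  have hXG : Disjoint X (Set.Iic 0 \ B) := Set.disjoint_left.2 fun m ⟨hm, _⟩ ⟨_, hmB⟩ => hmB hm
  rw [habove, Set.ncard_union_eq hPX hPfin hXfin] at hcard_above
  rw [hbelow, Set.ncard_union_eq hXG hXfin hGfin] at hcard_below
  simp only [chargeOn, Set.inter_univ]
  omega

lemma betaSet_subset_Iic {L : List ℕ} (hs : List.Pairwise (· ≥ ·) L) :
    betaSet L ⊆ Set.Iic (betaFun L 0) := by
  rintro _ ⟨j, rfl⟩
  exact (betaFun_strictAnti hs).antitone (Nat.zero_le j)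

lemma Iic_neg_length_subset_betaSet (L : List ℕ) : Set.Iic (-(L.length : ℤ)) ⊆ betaSet L :=
  fun m (hm : m ≤ -(L.length : ℤ)) =>
    ⟨(-m).toNat, by rw [betaFun_of_length_le (by omega)]; omega⟩

lemma chargeOn_univ_betaSet {L : List ℕ} (hs : List.Pairwise (· ≥ ·) L) :
    chargeOn Set.univ (betaSet L) = 0 := by
  have hlen := betaFun_of_length_le (L := L) le_rfl
  have := natCast_add_eq_chargeOn_univ (betaFun_strictAnti hs) (j := L.length) (by omega)
    (hlen ▸ Iic_neg_length_subset_betaSet L)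
  rw [betaSet, ← this, hlen, add_neg_cancel]

lemma exists_strictAnti_range_eq {B : Set ℤ} {T N : ℤ} (hT : B ⊆ Set.Iic T)
    (hN : Set.Iic N ⊆ B) : ∃ f : ℕ → ℤ, StrictAnti f ∧ Set.range f = B := by
  classical
  set p : ℕ → Prop := fun k => T - k ∈ B
  have hinf : (Set.ofPred p).Infinite := by
    refine (Set.Ici_infinite (T - N).toNat).mono fun k hk => hN ?_
    simp only [Set.mem_Ici, Set.mem_Iic] at hk ⊢
    omega
  refine ⟨fun j => T - Nat.nth p j, fun i j hij => ?_, ?_⟩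
  · have : Nat.nth p i < Nat.nth p j := Nat.nth_strictMono hinf hij
    simp only
    omega
  · ext m
    constructor
    · rintro ⟨j, rfl⟩
      exact Nat.nth_mem_of_infinite hinf j
    · intro hm
      have hmT : m ≤ T := hT hm
      have hpk : p (T - m).toNat := by simpa [p, Int.toNat_of_nonneg (sub_nonneg.2 hmT)] using hm
      refine ⟨Nat.count p (T - m).toNat, ?_⟩
      simp only [Nat.nth_count hpk]
      omega

lemma exists_partFn_eq {g : ℕ → ℕ} (hg : Antitone g) (h0 : ∃ j, g j = 0) :
    ∃ L : PartL, partFn L.1 = g := by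
  classical
  set ℓ := Nat.find h0
  have hpos : ∀ j < ℓ, 0 < g j := fun j hj => Nat.pos_of_ne_zero (Nat.find_min h0 hj)
  have hzero : ∀ j, ℓ ≤ j → g j = 0 := fun j hj =>
    Nat.eq_zero_of_le_zero ((hg hj).trans (Nat.find_spec h0).le)
  refine ⟨⟨(List.range ℓ).map g, ?_, ?_⟩, funext fun j => ?_⟩
  · exact List.pairwise_lt_range.map g fun i j hij => hg hij.le
  · simp only [List.mem_map, List.mem_range]
    rintro _ ⟨j, hj, rfl⟩
    exact hpos j hj
  · rcases lt_or_ge j ℓ with hj | hj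
    · simp [partFn, hj]
    · rw [partFn, List.getD_eq_default _ _ (by simpa using hj), hzero j hj]

/-- The parts are `λ_{j+1} = f j + j`, where `f j` is the `j`-th largest element of `B`. -/
lemma exists_betaSet_eq {B : Set ℤ} {T N : ℤ} (hT : B ⊆ Set.Iic T) (hN : Set.Iic N ⊆ B)
    (hB : chargeOn Set.univ B = 0) : ∃ L : PartL, betaSet L.1 = B := by
  obtain ⟨f, hf, rfl⟩ := exists_strictAnti_range_eq hT hN
  set u : ℕ → ℤ := fun j => f j + j
  have hu : Antitone u := antitone_nat_of_succ_le fun j => by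
    have := hf (Nat.lt_add_one j)
    simp only [u, Nat.cast_succ]
    omega
  set J := (f 0 - min N 0).toNat
  have hu0 : ∀ j, J ≤ j → u j = 0 := fun j hj => by
    have hJ := hu (Nat.zero_le J)
    have hjJ := hf.antitone hj
    simp only [u, Nat.cast_zero, add_zero] at hJ
    have hfj : f j ≤ min N 0 := by omega
    rw [← hB, ← natCast_add_eq_chargeOn_univ hf (hfj.trans (min_le_right _ _))
      fun m hm => hN ((Set.mem_Iic.1 hm).trans (hfj.trans (min_le_left _ _)))]
    exact add_comm _ _
  have hu_nonneg : ∀ j, 0 ≤ u j := fun j =>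
    hu0 (max j J) (le_max_right _ _) ▸ hu (le_max_left _ _)
  obtain ⟨L, hL⟩ := exists_partFn_eq (g := fun j => (u j).toNat)
    (fun i j h => Int.toNat_le_toNat (hu h)) ⟨J, by simp [hu0 J le_rfl]⟩
  refine ⟨L, congrArg Set.range (funext fun j => ?_)⟩
  have := hu_nonneg j
  simp only [betaFun, hL, u] at this ⊢
  omega

def runner (n : ℕ) (r : Fin n) : Set ℤ := {m | m % (n : ℤ) = r}

lemma Fin.intCast_val_emod {n : ℕ} (r : Fin n) : ((r : ℕ) : ℤ) % n = r := by
  exact_mod_cast Nat.mod_eq_of_lt r.2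

lemma abacus_eq_chargeOn (n : ℕ) (L : List ℕ) (r : Fin n) :
    abacus n L r = chargeOn (runner n r) (betaSet L) := by
  unfold abacus chargeOn runner
  congr 3 <;> ext m <;> simp only [Set.mem_ofPred_eq, Set.mem_inter_iff, Set.mem_sdiff,
    Set.mem_Ioi, Set.mem_Iic] <;> tauto

lemma exists_mem_runner {n : ℕ} (hn : 0 < n) (m : ℤ) : ∃ r : Fin n, m ∈ runner n r :=
  ⟨⟨(m % n).toNat, by have := Int.emod_lt_of_pos m (by omega : (0 : ℤ) < n); omega⟩, by
    simp [runner, Int.emod_nonneg m (by omega : (n : ℤ) ≠ 0)]⟩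

lemma eq_of_mem_runner {n : ℕ} {r r' : Fin n} {m : ℤ} (h : m ∈ runner n r)
    (h' : m ∈ runner n r') : r = r' :=
  Fin.ext (by simp only [runner, Set.mem_ofPred_eq] at h h'; omega)

lemma sub_mem_runner_iff {n : ℕ} {r : Fin n} {m : ℤ} :
    m - n ∈ runner n r ↔ m ∈ runner n r := by
  simp [runner, Int.sub_emod_right]

lemma sum_ncard_inter_runner {n : ℕ} (hn : 0 < n) {S : Set ℤ} (hS : S.Finite) :
    ∑ r : Fin n, (S ∩ runner n r).ncard = S.ncard := by
  classical
  choose res hres using exists_mem_runner hn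
  obtain ⟨s, rfl⟩ := hS.exists_finset_coe
  have hfiber : ∀ r, (s : Set ℤ) ∩ runner n r = ↑{m ∈ s | res m = r} := fun r => by
    ext m
    simp only [Set.mem_inter_iff, Finset.coe_filter, Set.mem_ofPred_eq, Finset.mem_coe]
    exact and_congr_right fun _ =>
      ⟨fun h => eq_of_mem_runner (hres m) h, fun h => h ▸ hres m⟩
  simp only [hfiber, Set.ncard_coe_finset]
  exact (Finset.card_eq_sum_card_fiberwise fun m _ => Finset.mem_univ (res m)).symm

lemma sum_chargeOn_runner {n : ℕ} (hn : 0 < n) {B : Set ℤ} {T N : ℤ} (hT : B ⊆ Set.Iic T)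
    (hN : Set.Iic N ⊆ B) : ∑ r : Fin n, chargeOn (runner n r) B = chargeOn Set.univ B := by
  have hP : (B ∩ Set.Ioi 0).Finite :=
    (Set.finite_Ioc 0 T).subset fun m ⟨hmB, hm⟩ => ⟨hm, hT hmB⟩
  have hG : (Set.Iic 0 \ B).Finite :=
    (Set.finite_Ioc N 0).subset fun m ⟨hm, hmB⟩ => ⟨not_le.1 fun h => hmB (hN h), hm⟩
  simp only [chargeOn, Finset.sum_sub_distrib, ← Nat.cast_sum, sum_ncard_inter_runner hn hP,
    sum_ncard_inter_runner hn hG, Set.inter_univ]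

lemma chargeOn_congr {R B B' : Set ℤ} (h : B ∩ R = B' ∩ R) : chargeOn R B = chargeOn R B' := by
  have hP : B ∩ Set.Ioi 0 ∩ R = B' ∩ Set.Ioi 0 ∩ R := by
    rw [Set.inter_right_comm, h, Set.inter_right_comm]
  have hG : Set.Iic 0 \ B ∩ R = Set.Iic 0 \ B' ∩ R := by
    ext m
    have := Set.ext_iff.1 h m
    simp only [Set.mem_inter_iff, Set.mem_sdiff] at this ⊢
    tauto
  rw [chargeOn, chargeOn, hP, hG]

lemma ncard_Ioc_inter_runner {n : ℕ} (r : Fin n) (a b : ℤ) :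
    (Set.Ioc a b ∩ runner n r).ncard = ((b - r) / n - (a - r) / n).toNat := by
  have hn : (0 : ℤ) < n := by have := r.pos; omega
  have hset : Set.Ioc a b ∩ runner n r = ↑{x ∈ Finset.Ioc a b | x ≡ r [ZMOD n]} := by
    ext m
    simp [runner, Int.ModEq, Fin.intCast_val_emod]
  have hcard := Int.Ioc_filter_modEq_card a b hn (r : ℤ)
  rw [← Int.cast_sub, ← Int.cast_sub, Int.cast_natCast, Rat.floor_intCast_div_natCast,
    Rat.floor_intCast_div_natCast] at hcard
  rw [hset, Set.ncard_coe_finset]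
  omega

lemma exists_mem_runner_le {n : ℕ} (r : Fin n) (N : ℤ) : ∃ m ∈ runner n r, m ≤ N := by
  have hn : (1 : ℤ) ≤ n := by have := r.pos; omega
  refine ⟨r - n * (r - N).toNat, ?_, ?_⟩
  · simp [runner, Fin.intCast_val_emod]
  · nlinarith [Int.self_le_toNat ((r : ℤ) - N), Int.natCast_nonneg ((r : ℤ) - N).toNat]

lemma chargeOn_runner_Iic {n : ℕ} (r : Fin n) (t : ℤ) :
    chargeOn (runner n r) (Set.Iic t) = (t - r) / n - (-(r : ℤ)) / n := by
  have hpos : Set.Iic t ∩ Set.Ioi 0 ∩ runner n r = Set.Ioc 0 t ∩ runner n r := by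
    rw [Set.inter_comm (Set.Iic _), Set.Ioi_inter_Iic]
  have hgap : Set.Iic 0 \ Set.Iic t ∩ runner n r = Set.Ioc t 0 ∩ runner n r := by
    ext m
    simp only [Set.mem_inter_iff, Set.mem_sdiff, Set.mem_Iic, Set.mem_Ioc, not_le]
    tauto
  rw [chargeOn, hpos, hgap, ncard_Ioc_inter_runner, ncard_Ioc_inter_runner, zero_sub]
  omega

/-- `r + n * ((-r) / n)` is the highest non-positive position on runner `r`; the top bead of a
core with abacus tuple `a` sits `a r` steps above it. -/
def topBead (n : ℕ) (a : Fin n → ℤ) (r : Fin n) : ℤ := r + n * (a r + (-(r : ℤ)) / n)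

lemma chargeOn_runner_Iic_topBead {n : ℕ} (a : Fin n → ℤ) (r : Fin n) :
    chargeOn (runner n r) (Set.Iic (topBead n a r)) = a r := by
  have hn : (n : ℤ) ≠ 0 := by have := r.pos; omega
  rw [chargeOn_runner_Iic, topBead, add_sub_cancel_left, Int.mul_ediv_cancel_left _ hn,
    add_sub_cancel_right]

lemma IsCore.sub_mul_mem {n : ℕ} {L : List ℕ} (hc : IsCore n L) {m : ℤ} (hm : m ∈ betaSet L)
    (k : ℕ) : m - n * k ∈ betaSet L := by
  induction k with
  | zero => simpa using hm
  | succ k ih => simpa [mul_add, sub_add_eq_sub_sub] using hc _ ih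

lemma IsCore.betaSet_inter_runner {n : ℕ} {L : List ℕ} (hs : List.Pairwise (· ≥ ·) L)
    (hc : IsCore n L) (r : Fin n) :
    betaSet L ∩ runner n r = Set.Iic (topBead n (abacus n L) r) ∩ runner n r := by
  classical
  have hn : (0 : ℤ) < n := by have := r.pos; omega
  obtain ⟨m₀, hm₀r, hm₀⟩ := exists_mem_runner_le r (-L.length)
  obtain ⟨t, ⟨htB, htr⟩, htop⟩ := Int.exists_greatest_of_bdd (P := (· ∈ betaSet L ∩ runner n r))
    ⟨betaFun L 0, fun m hm => betaSet_subset_Iic hs hm.1⟩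
    ⟨m₀, Iic_neg_length_subset_betaSet L hm₀, hm₀r⟩
  have hBt : betaSet L ∩ runner n r = Set.Iic t ∩ runner n r := by
    ext m
    refine ⟨fun hm => ⟨htop m hm, hm.2⟩, fun ⟨hmt, hmr⟩ => ⟨?_, hmr⟩⟩
    obtain ⟨c, hc'⟩ := Int.ModEq.dvd (hmr.trans htr.symm : m ≡ t [ZMOD n])
    have hc0 : 0 ≤ c := by nlinarith [Set.mem_Iic.1 hmt]
    simpa [Int.toNat_of_nonneg hc0, ← hc'] using hc.sub_mul_mem htB c.toNat
  have htop_eq : topBead n (abacus n L) r = t := by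
    rw [topBead, abacus_eq_chargeOn, chargeOn_congr hBt, chargeOn_runner_Iic, sub_add_cancel,
      Int.mul_ediv_cancel' (Int.dvd_self_sub_of_emod_eq htr), add_sub_cancel]
  rw [hBt, htop_eq]

lemma sum_abacus_eq_zero {n : ℕ} (hn : 0 < n) (L : PartL) : ∑ r, abacus n L.1 r = 0 := by
  simp only [abacus_eq_chargeOn]
  rw [sum_chargeOn_runner hn (betaSet_subset_Iic L.2.1) (Iic_neg_length_subset_betaSet L.1),
    chargeOn_univ_betaSet L.2.1]

lemma eq_of_isCore_of_abacus_eq {n : ℕ} (hn : 0 < n) {L₁ L₂ : PartL} (h₁ : IsCore n L₁.1)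
    (h₂ : IsCore n L₂.1) (h : abacus n L₁.1 = abacus n L₂.1) : L₁ = L₂ := by
  refine betaSet_injective (Set.ext fun m => ?_)
  obtain ⟨r, hr⟩ := exists_mem_runner hn m
  have hrun := h₁.betaSet_inter_runner L₁.2.1 r
  rw [h, ← h₂.betaSet_inter_runner L₂.2.1 r] at hrun
  simpa [hr] using Set.ext_iff.1 hrun m

lemma exists_isCore_abacus_eq {n : ℕ} (hn : 0 < n) (a : Fin n → ℤ) (ha : ∑ r, a r = 0) :
    ∃ L : PartL, IsCore n L.1 ∧ abacus n L.1 = a := by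
  have : Nonempty (Fin n) := ⟨⟨0, hn⟩⟩
  set B : Set ℤ := {m | ∀ r, m ∈ runner n r → m ≤ topBead n a r}
  have hBr : ∀ r, B ∩ runner n r = Set.Iic (topBead n a r) ∩ runner n r := fun r => by
    ext m
    refine ⟨fun ⟨hm, hmr⟩ => ⟨hm r hmr, hmr⟩, fun ⟨hm, hmr⟩ => ⟨fun r' hmr' => ?_, hmr⟩⟩
    exact eq_of_mem_runner hmr hmr' ▸ hm
  obtain ⟨T, hT⟩ := Finite.exists_le (topBead n a)
  obtain ⟨N, hN⟩ := Finite.exists_ge (topBead n a)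
  have hBT : B ⊆ Set.Iic T := fun m hm =>
    let ⟨r, hmr⟩ := exists_mem_runner hn m
    (hm r hmr).trans (hT r)
  have hNB : Set.Iic N ⊆ B := fun m hm r _ => (Set.mem_Iic.1 hm).trans (hN r)
  have hcharge : chargeOn Set.univ B = 0 := by
    rw [← sum_chargeOn_runner hn hBT hNB, ← ha]
    exact Finset.sum_congr rfl fun r _ => by
      rw [chargeOn_congr (hBr r), chargeOn_runner_Iic_topBead]
  obtain ⟨L, hL⟩ := exists_betaSet_eq hBT hNB hcharge
  refine ⟨L, fun m hm => ?_, funext fun r => ?_⟩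
  · rw [hL] at hm ⊢
    exact fun r hr => by have := hm r (sub_mem_runner_iff.1 hr); omega
  · rw [abacus_eq_chargeOn, hL, chargeOn_congr (hBr r), chargeOn_runner_Iic_topBead]

/-- The abacus map is a bijection from the set of `n`-core partitions onto the
set of `n`-tuples of integers summing to `0`. -/
theorem stmt2 (n : ℕ) (hn : 2 ≤ n) :
    Set.BijOn (fun lam : PartL => abacus n lam.1)
      {lam : PartL | IsCore n lam.1}
      {a : Fin n → ℤ | ∑ r, a r = 0} := by
  have hn0 : 0 < n := by omega
  refine ⟨fun L _ => sum_abacus_eq_zero hn0 L,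
    fun L₁ h₁ L₂ h₂ h => eq_of_isCore_of_abacus_eq hn0 h₁ h₂ h, fun a ha => ?_⟩
  obtain ⟨L, hL, rfl⟩ := exists_isCore_abacus_eq hn0 a ha
  exact ⟨L, hL, rfl⟩
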